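/- Let p ≥ 2, M ≥ 1, let γ_1, …, γ_M ∈ ℝ, for each 1 ≤ i ≤ p and 1 ≤ m ≤ M let h_{im} : ℝ → ℝ be differentiable with measurable derivative, and let ρ_1, …, ρ_p : ℝ → ℝ be nonnegative measurable probability densities. Assume for every i, m that h_{im} and h'_{im} are square-integrable with respect to the measure with density ρ_i against Lebesgue measure. Define f(x) = γ_0 + Σ_{m=1}^M γ_m Π_{k=1}^p h_{km}(x_k) and ρ(x) = Π_{i=1}^p ρ_i(x_i). Then for all i ≠ j, the off-diagonal entry of the C matrix of (f, ρ) satisfies C_{ij} = Σ_{m1=1}^M Σ_{m2=1}^M γ_{m1} γ_{m2} I_1^{(i)}[m1, m2] I_1^{(j)}[m2, m1] Π_{k ∉ {i,j}} I_2^{(k)}[m1, m2], where I_1^{(i)}[m1, m2] = ∫_ℝ h'_{i m1}(x) h_{i m2}(x) ρ_i(x) dx and I_2^{(k)}[m1, m2] = ∫_ℝ h_{k m1}(x) h_{k m2}(x) ρ_k(x) dx. -/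

import Mathlib

/-!
Because `f` is a sum of tensor products, `∂ᵢf · ∂ⱼf · ρ` expands into a double sum over
`(m1, m2)` of products of one-variable functions, one per coordinate: `h'ᵢₘ₁ hᵢₘ₂ ρᵢ` in `xᵢ`,
`h'ⱼₘ₂ hⱼₘ₁ ρⱼ` in `xⱼ` and `hₖₘ₁ hₖₘ₂ ρₖ` in every other `xₖ`. By Cauchy–Schwarz in `L²(ρₖ)`
each factor is integrable, so the integral splits over the double sum and Fubini factorises
every term into one-dimensional integrals.
-/

open MeasureTheory Matrix

/-- The `i`-th partial derivative of `f` at `x`. -/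
noncomputable def partialDeriv' {p : ℕ} (f : (Fin p → ℝ) → ℝ) (i : Fin p)
    (x : Fin p → ℝ) : ℝ :=
  fderiv ℝ f x (Pi.single i 1)

/-- The `C` matrix of `(f, ρ)`: `C i j = ∫ ∂f/∂xᵢ ∂f/∂xⱼ ρ`. -/
noncomputable def Cmat {p : ℕ} (f : (Fin p → ℝ) → ℝ) (ρ : (Fin p → ℝ) → ℝ) :
    Matrix (Fin p) (Fin p) ℝ :=
  Matrix.of fun i j => ∫ x, partialDeriv' f i x * partialDeriv' f j x * ρ x

open Finset

section Products

variable {ι : Type*} [Fintype ι] [DecidableEq ι]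

theorem Fintype.prod_erase_eq_mul_prod_erase_erase {M : Type*} [CommMonoid M] (f : ι → M)
    {i j : ι} (hij : i ≠ j) :
    ∏ k ∈ univ.erase i, f k = f j * ∏ k ∈ (univ.erase i).erase j, f k :=
  (mul_prod_erase _ _ (mem_erase.2 ⟨hij.symm, mem_univ j⟩)).symm

theorem Fintype.prod_eq_mul_mul_prod_erase_erase {M : Type*} [CommMonoid M] (f : ι → M)
    {i j : ι} (hij : i ≠ j) :
    ∏ k, f k = f i * f j * ∏ k ∈ (univ.erase i).erase j, f k := by
  rw [mul_assoc, ← Fintype.prod_erase_eq_mul_prod_erase_erase _ hij,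
    mul_prod_erase _ _ (mem_univ i)]

theorem prod_update_update {β R : Type*} [CommMonoid R] {i j : ι} (hij : i ≠ j)
    (F : ι → β → R) (a b : β) (c : ι → β) :
    ∏ k, F k (Function.update (Function.update c j b) i a k)
      = F i a * F j b * ∏ k ∈ (univ.erase i).erase j, F k (c k) := by
  rw [Fintype.prod_eq_mul_mul_prod_erase_erase _ hij]
  congr 1
  · simp [Function.update_of_ne hij.symm]
  · refine prod_congr rfl fun k hk => ?_
    rw [Function.update_of_ne (ne_of_mem_erase (mem_of_mem_erase hk)),
      Function.update_of_ne (ne_of_mem_erase hk)]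

theorem mul_mul_prod_erase_erase_eq_prod_update {E R : Type*} [CommMonoid R] {i j : ι} (hij : i ≠ j)
    (a b : E → R) (c : ι → E → R) :
    (fun x : ι → E => a (x i) * b (x j) * ∏ k ∈ (univ.erase i).erase j, c k (x k))
      = fun x => ∏ k, Function.update (Function.update c j b) i a k (x k) :=
  funext fun x => (prod_update_update hij (fun k (g : E → R) => g (x k)) a b c).symm

variable {E : Type*} [MeasurableSpace E] (μ : ι → Measure E) [∀ k, SigmaFinite (μ k)]
  {i j : ι} {a b : E → ℝ} {c : ι → E → ℝ}

theorem integrable_pi_mul_mul_prod_erase_erase (hij : i ≠ j) (ha : Integrable a (μ i))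
    (hb : Integrable b (μ j)) (hc : ∀ k ∈ (univ.erase i).erase j, Integrable (c k) (μ k)) :
    Integrable (fun x => a (x i) * b (x j) * ∏ k ∈ (univ.erase i).erase j, c k (x k))
      (Measure.pi μ) := by
  rw [mul_mul_prod_erase_erase_eq_prod_update hij]
  refine Integrable.fintype_prod fun k => ?_
  by_cases hki : k = i
  · subst hki; simpa using ha
  by_cases hkj : k = j
  · subst hkj; simpa [hki] using hb
  · simpa [hki, hkj] using hc k (by simp [hki, hkj])

theorem integral_pi_mul_mul_prod_erase_erase (hij : i ≠ j) :
    ∫ x, a (x i) * b (x j) * ∏ k ∈ (univ.erase i).erase j, c k (x k) ∂Measure.pi μ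
      = (∫ t, a t ∂μ i) * (∫ t, b t ∂μ j) * ∏ k ∈ (univ.erase i).erase j, ∫ t, c k t ∂μ k := by
  rw [mul_mul_prod_erase_erase_eq_prod_update hij, integral_fintype_prod_eq_prod]
  exact prod_update_update hij (fun k g => ∫ t, g t ∂μ k) a b c

end Products

theorem integrable_mul_mul_of_memLp_withDensity {α : Type*} [MeasurableSpace α] {μ : Measure α}
    {ρ u v : α → ℝ} (hρ_nonneg : ∀ x, 0 ≤ ρ x) (hρ_meas : Measurable ρ)
    (hu : MemLp u 2 (μ.withDensity fun x => ENNReal.ofReal (ρ x)))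
    (hv : MemLp v 2 (μ.withDensity fun x => ENNReal.ofReal (ρ x))) :
    Integrable (fun x => u x * v x * ρ x) μ := by
  have huv : Integrable (v • u) (μ.withDensity fun x => ENNReal.ofReal (ρ x)) :=
    memLp_one_iff_integrable.mp (hu.smul hv (hpqr := ⟨by simp [ENNReal.inv_two_add_inv_two]⟩))
  rw [integrable_withDensity_iff (by fun_prop) (by simp)] at huv
  refine huv.congr (.of_forall fun x => ?_)
  simp only [smul_eq_mul, Pi.mul_apply, ENNReal.toReal_ofReal (hρ_nonneg x)]
  ring

section PartialDeriv

variable {p : ℕ}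

theorem partialDeriv'_prod_apply {u : Fin p → ℝ → ℝ} {x : Fin p → ℝ}
    (hu : ∀ k, DifferentiableAt ℝ (u k) (x k)) (i : Fin p) :
    partialDeriv' (fun y => ∏ k, u k (y k)) i x
      = deriv (u i) (x i) * ∏ k ∈ univ.erase i, u k (x k) := by
  have hcomp : ∀ k, HasFDerivAt (fun y : Fin p → ℝ => u k (y k))
      (deriv (u k) (x k) • ContinuousLinearMap.proj k) x :=
    fun k => (hu k).hasDerivAt.comp_hasFDerivAt x
      (ContinuousLinearMap.proj (R := ℝ) (φ := fun _ : Fin p => ℝ) k).hasFDerivAt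
  rw [partialDeriv', (HasFDerivAt.finsetProd fun k _ => hcomp k).fderiv]
  simp [Pi.single_apply, mul_comm]

theorem partialDeriv'_const_add_sum_mul {ι : Type*} (s : Finset ι)
    {F : ι → (Fin p → ℝ) → ℝ} {x : Fin p → ℝ} (hF : ∀ m ∈ s, DifferentiableAt ℝ (F m) x)
    (c : ℝ) (γ : ι → ℝ) (i : Fin p) :
    partialDeriv' (fun y => c + ∑ m ∈ s, γ m * F m y) i x
      = ∑ m ∈ s, γ m * partialDeriv' (F m) i x := by
  rw [partialDeriv', fderiv_const_add, fderiv_fun_sum fun m hm => (hF m hm).const_mul (γ m)]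
  simp only [_root_.sum_apply]
  exact sum_congr rfl fun m hm => by rw [fderiv_const_mul (hF m hm)]; rfl

theorem partialDeriv'_tensor {M : ℕ} (γ0 : ℝ) (γ : Fin M → ℝ) {h : Fin p → Fin M → ℝ → ℝ}
    (hh : ∀ k m, Differentiable ℝ (h k m)) (i : Fin p) (x : Fin p → ℝ) :
    partialDeriv' (fun y => γ0 + ∑ m, γ m * ∏ k, h k m (y k)) i x
      = ∑ m, γ m * (deriv (h i m) (x i) * ∏ k ∈ univ.erase i, h k m (x k)) := by
  rw [partialDeriv'_const_add_sum_mul _ (fun m _ => by fun_prop) γ0 γ i]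
  simp only [partialDeriv'_prod_apply fun k => (hh k _).differentiableAt]

end PartialDeriv

theorem partialDeriv'_tensor_mul_partialDeriv'_tensor_mul_prod {p M : ℕ} (γ0 : ℝ)
    (γ : Fin M → ℝ) {h : Fin p → Fin M → ℝ → ℝ} (hh : ∀ k m, Differentiable ℝ (h k m))
    (ρ : Fin p → ℝ → ℝ) {i j : Fin p} (hij : i ≠ j) (x : Fin p → ℝ) :
    partialDeriv' (fun y => γ0 + ∑ m, γ m * ∏ k, h k m (y k)) i x
        * partialDeriv' (fun y => γ0 + ∑ m, γ m * ∏ k, h k m (y k)) j x * ∏ k, ρ k (x k)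
      = ∑ m1, ∑ m2, γ m1 * γ m2 *
          (deriv (h i m1) (x i) * h i m2 (x i) * ρ i (x i) *
            (deriv (h j m2) (x j) * h j m1 (x j) * ρ j (x j)) *
            ∏ k ∈ (univ.erase i).erase j, h k m1 (x k) * h k m2 (x k) * ρ k (x k)) := by
  rw [partialDeriv'_tensor γ0 γ hh i x, partialDeriv'_tensor γ0 γ hh j x, sum_mul_sum, sum_mul]
  refine sum_congr rfl fun m1 _ => ?_
  rw [sum_mul]
  refine sum_congr rfl fun m2 _ => ?_
  rw [Fintype.prod_erase_eq_mul_prod_erase_erase _ hij,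
    Fintype.prod_erase_eq_mul_prod_erase_erase _ hij.symm, erase_right_comm (a := j) (b := i),
    Fintype.prod_eq_mul_mul_prod_erase_erase _ hij, prod_mul_distrib, prod_mul_distrib]
  ring

theorem Cmat_offdiagonal_tensor_general {p M : ℕ}
    (γ0 : ℝ) (γ : Fin M → ℝ) (h : Fin p → Fin M → ℝ → ℝ)
    (hh : ∀ i m, Differentiable ℝ (h i m))
    (ρ : Fin p → ℝ → ℝ) (hρ_nonneg : ∀ i x, 0 ≤ ρ i x)
    (hρ_meas : ∀ i, Measurable (ρ i))
    (hsq : ∀ i m, MemLp (h i m) 2 (volume.withDensity fun x => ENNReal.ofReal (ρ i x)))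
    (hsq' : ∀ i m,
      MemLp (deriv (h i m)) 2 (volume.withDensity fun x => ENNReal.ofReal (ρ i x)))
    (f : (Fin p → ℝ) → ℝ)
    (hfdef : ∀ x, f x = γ0 + ∑ m, γ m * ∏ k, h k m (x k))
    (ρprod : (Fin p → ℝ) → ℝ) (hρprod : ∀ x, ρprod x = ∏ i, ρ i (x i)) :
    ∀ i j, i ≠ j → Cmat f ρprod i j =
      ∑ m1, ∑ m2, γ m1 * γ m2 *
        (∫ x, deriv (h i m1) x * h i m2 x * ρ i x) *
        (∫ x, deriv (h j m2) x * h j m1 x * ρ j x) *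
        ∏ k ∈ (Finset.univ.erase i).erase j, ∫ x, h k m1 x * h k m2 x * ρ k x := by
  intro i j hij
  obtain rfl : f = _ := funext hfdef
  obtain rfl : ρprod = _ := funext hρprod
  have hint : ∀ k {u v : ℝ → ℝ}, MemLp u 2 (volume.withDensity fun x => ENNReal.ofReal (ρ k x)) →
      MemLp v 2 (volume.withDensity fun x => ENNReal.ofReal (ρ k x)) →
      Integrable fun t => u t * v t * ρ k t :=
    fun k _ _ => integrable_mul_mul_of_memLp_withDensity (hρ_nonneg k) (hρ_meas k)
  have hterm : ∀ m1 m2, Integrable (μ := Measure.pi fun _ => volume) fun x : Fin p → ℝ =>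
      deriv (h i m1) (x i) * h i m2 (x i) * ρ i (x i) *
        (deriv (h j m2) (x j) * h j m1 (x j) * ρ j (x j)) *
        ∏ k ∈ (univ.erase i).erase j, h k m1 (x k) * h k m2 (x k) * ρ k (x k) := fun m1 m2 =>
    integrable_pi_mul_mul_prod_erase_erase _ hij (hint i (hsq' i m1) (hsq i m2))
      (hint j (hsq' j m2) (hsq j m1)) fun k _ => hint k (hsq k m1) (hsq k m2)
  simp only [Cmat, of_apply, partialDeriv'_tensor_mul_partialDeriv'_tensor_mul_prod γ0 γ hh ρ hij,
    volume_pi]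
  rw [integral_finsetSum _ fun m1 _ => integrable_finsetSum _ fun m2 _ => (hterm m1 m2).const_mul _]
  refine sum_congr rfl fun m1 _ => ?_
  rw [integral_finsetSum _ fun m2 _ => (hterm m1 m2).const_mul _]
  refine sum_congr rfl fun m2 _ => ?_
  rw [integral_const_mul, integral_pi_mul_mul_prod_erase_erase _ hij
    (a := fun t => deriv (h i m1) t * h i m2 t * ρ i t)
    (b := fun t => deriv (h j m2) t * h j m1 t * ρ j t)
    (c := fun k t => h k m1 t * h k m2 t * ρ k t)]
  ring

theorem Cmat_offdiagonal_tensor {p M : ℕ} (hp : 2 ≤ p) (hM : 1 ≤ M)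
    (γ0 : ℝ) (γ : Fin M → ℝ) (h : Fin p → Fin M → ℝ → ℝ)
    (hh : ∀ i m, Differentiable ℝ (h i m))
    (hh' : ∀ i m, Measurable (deriv (h i m)))
    (ρ : Fin p → ℝ → ℝ) (hρ_nonneg : ∀ i x, 0 ≤ ρ i x)
    (hρ_meas : ∀ i, Measurable (ρ i))
    (hρ_int : ∀ i, Integrable (ρ i)) (hρ_prob : ∀ i, ∫ x, ρ i x = 1)
    (hsq : ∀ i m, MemLp (h i m) 2 (volume.withDensity fun x => ENNReal.ofReal (ρ i x)))
    (hsq' : ∀ i m,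
      MemLp (deriv (h i m)) 2 (volume.withDensity fun x => ENNReal.ofReal (ρ i x)))
    (f : (Fin p → ℝ) → ℝ)
    (hfdef : ∀ x, f x = γ0 + ∑ m, γ m * ∏ k, h k m (x k))
    (ρprod : (Fin p → ℝ) → ℝ) (hρprod : ∀ x, ρprod x = ∏ i, ρ i (x i)) :
    ∀ i j, i ≠ j → Cmat f ρprod i j =
      ∑ m1, ∑ m2, γ m1 * γ m2 *
        (∫ x, deriv (h i m1) x * h i m2 x * ρ i x) *
        (∫ x, deriv (h j m2) x * h j m1 x * ρ j x) *
        ∏ k ∈ (Finset.univ.erase i).erase j, ∫ x, h k m1 x * h k m2 x * ρ k x :=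
  Cmat_offdiagonal_tensor_general γ0 γ h hh ρ hρ_nonneg hρ_meas hsq hsq' f hfdef ρprod hρprod
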